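/- arXiv:1212.1099 — 2 statements merged into one kernel-verified Lean document; each statement's English description precedes it below -/
import Mathlib

section
/- Assume that (E, F) admits energy measures: for each f ∈ B(E) there exists a nonnegative measure Γ(f) on σ(B(E)) such that every function of B(E) is Γ(f)-integrable and 2 ∫_X φ dΓ(f) = 2 E(φf, f) − E(φ, f²) for all φ ∈ B(E). Then for every f ∈ B(E) the transferred Radon measure (Γ(f))^ on Δ satisfies 2 ∫_Δ φ̂ d(Γ(f))^ = 2 Ê(φ̂ f̂, f̂) − Ê(φ̂, f̂²) for all φ ∈ B(E); consequently (Γ(f))^ coincides with the energy measure Γ̂(f̂) of f̂ for the transferred Dirichlet form. -/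
open MeasureTheory Filter Topology BoundedContinuousFunction
open scoped ZeroAtInfty ENNReal

/-- The complexification of a bounded real-valued function: we regard a bounded real
function on `X` as a bounded complex function. (`X` carries the discrete topology, so
`X →ᵇ ℝ` is exactly the space of bounded real-valued functions on `X`.) -/
noncomputable def cplx {X : Type*} [TopologicalSpace X] (f : X →ᵇ ℝ) : X →ᵇ ℂ :=
  BoundedContinuousFunction.comp Complex.ofReal Complex.isometry_ofReal.lipschitz f

/-- `A(B)`: the closure, in the supremum norm, of the complexification `B + iB` of a
set `B` of bounded real-valued functions, inside the C*-algebra of all bounded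
complex-valued functions on `X`. -/
noncomputable def AofB {X : Type*} [TopologicalSpace X] (B : Set (X →ᵇ ℝ)) : Set (X →ᵇ ℂ) :=
  closure {a : X →ᵇ ℂ | ∃ f ∈ B, ∃ g ∈ B, a = cplx f + Complex.I • cplx g}

/-- `B(E)`: the bounded measurable functions on `X` whose `μ`-equivalence class lies in
`F ∩ L¹(X, μ)` (here `F` is a set of functions closed under `μ`-a.e. modification, playing
the role of the domain of the Dirichlet form). -/
def BE {X : Type*} [TopologicalSpace X] {mX : MeasurableSpace X} (μ : Measure X)
    (F : Set (X → ℝ)) : Set (X →ᵇ ℝ) :=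
  {f : X →ᵇ ℝ | Measurable (⇑f) ∧ (⇑f : X → ℝ) ∈ F ∧ Integrable (⇑f) μ}

open scoped CompactlySupported

/-! The first identity is the defining property of `Γ(f)` read through the transfer
`∫_X g dΓ(f) = ∫_Δ ĝ d(Γ(f))^`.  For uniqueness, Gelfand duality makes the transforms `ĝ`,
`g ∈ B(E)`, uniformly dense in `C₀(Δ)`, and the Markov property makes them stable under
`t ↦ min (max t 0) 1`.  Clamping such approximations of Urysohn functions bounds `(Γ(f))^`
on compact sets by the total mass of the competitor `Γ'`, so both measures are finite; then
they have the same integrals on `C_c(Δ)`, and regular measures are determined by those. -/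

namespace MeasureTheory

variable {Δ : Type*} [MeasurableSpace Δ]

lemma measureReal_le_integral_of_one_le {μ : Measure Δ} {K : Set Δ} {s : Δ → ℝ}
    (hK : MeasurableSet K) (hμK : μ K ≠ ⊤) (hs : Integrable s μ) (hs0 : 0 ≤ s)
    (hsK : ∀ y ∈ K, 1 ≤ s y) : μ.real K ≤ ∫ y, s y ∂μ := by
  rw [← integral_indicator_one hK]
  refine integral_mono ((integrable_indicator_iff hK).2 (integrableOn_const hμK)) hs fun y => ?_
  by_cases hy : y ∈ K
  · simpa [hy] using hsK y hy
  · simpa [hy] using hs0 y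

lemma integral_le_measureReal_univ {ν : Measure Δ} [IsFiniteMeasure ν] {s : Δ → ℝ}
    (hs : Integrable s ν) (hs1 : ∀ y, s y ≤ 1) : ∫ y, s y ∂ν ≤ ν.real Set.univ := by
  simpa using integral_mono hs (integrable_const 1) hs1

lemma abs_integral_sub_le_of_abs_sub_le {μ : Measure Δ} [IsFiniteMeasure μ] {s k : Δ → ℝ}
    (hs : Integrable s μ) (hk : Integrable k μ) {ε : ℝ} (hsk : ∀ y, |s y - k y| ≤ ε) :
    |∫ y, s y ∂μ - ∫ y, k y ∂μ| ≤ ε * μ.real Set.univ := by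
  rw [← integral_sub hs hk]
  exact norm_integral_le_of_norm_le_const
    (ae_of_all _ fun y => (Real.norm_eq_abs _).trans_le (hsk y))

lemma integral_eq_of_forall_abs_sub_le {μ ν : Measure Δ} [IsFiniteMeasure μ]
    [IsFiniteMeasure ν] {k : Δ → ℝ} (hkμ : Integrable k μ) (hkν : Integrable k ν)
    (happrox : ∀ ε > 0, ∃ s : Δ → ℝ, Integrable s μ ∧ Integrable s ν ∧
      ∫ y, s y ∂μ = ∫ y, s y ∂ν ∧ ∀ y, |s y - k y| ≤ ε) :
    ∫ y, k y ∂μ = ∫ y, k y ∂ν := by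
  have hbound : ∀ ε > 0,
      |∫ y, k y ∂μ - ∫ y, k y ∂ν| ≤ ε * (μ.real Set.univ + ν.real Set.univ) := by
    intro ε hε
    obtain ⟨s, hsμ, hsν, hs, hsk⟩ := happrox ε hε
    have hμ := abs_integral_sub_le_of_abs_sub_le hsμ hkμ hsk
    have hν := abs_integral_sub_le_of_abs_sub_le hsν hkν hsk
    calc |∫ y, k y ∂μ - ∫ y, k y ∂ν|
        = |(∫ y, s y ∂ν - ∫ y, k y ∂ν) - (∫ y, s y ∂μ - ∫ y, k y ∂μ)| := by
          rw [hs]; congr 1; ring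
      _ ≤ ε * ν.real Set.univ + ε * μ.real Set.univ := (abs_sub _ _).trans (add_le_add hν hμ)
      _ = ε * (μ.real Set.univ + ν.real Set.univ) := by ring
  have hlim :
      Tendsto (fun ε : ℝ => ε * (μ.real Set.univ + ν.real Set.univ)) (𝓝[>] 0) (𝓝 0) := by
    simpa using ((tendsto_id (x := 𝓝 (0 : ℝ))).mul_const _).mono_left nhdsWithin_le_nhds
  have h := ge_of_tendsto hlim (eventually_nhdsWithin_of_forall hbound)
  exact sub_eq_zero.1 (abs_nonpos_iff.1 h)

section Regular

variable [TopologicalSpace Δ] [LocallyCompactSpace Δ] [T2Space Δ] [BorelSpace Δ]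
  {μ ν : Measure Δ} {S : Set (Δ → ℝ)}

lemma isFiniteMeasure_of_integral_eq_of_dense [μ.Regular] [IsFiniteMeasure ν]
    (hS : ∀ s ∈ S, Integrable s μ ∧ Integrable s ν ∧ ∫ y, s y ∂μ = ∫ y, s y ∂ν)
    (hSclamp : ∀ s ∈ S, (fun y => min (max (s y) 0) 1) ∈ S)
    (hSdense : ∀ k : C_c(Δ, ℝ), ∀ ε > 0, ∃ s ∈ S, ∀ y, |s y - k y| ≤ ε) :
    IsFiniteMeasure μ := by
  suffices hK : ∀ K, IsCompact K → μ K ≤ ν Set.univ by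
    refine ⟨lt_of_le_of_lt ?_ (measure_lt_top ν Set.univ)⟩
    rw [Measure.Regular.innerRegular.measure_eq_iSup isOpen_univ]
    exact iSup₂_le fun K _ => iSup_le (hK K)
  intro K hK
  obtain ⟨k, hkK, hkc, -⟩ :=
    exists_continuousMap_one_of_isCompact_subset_isOpen hK isOpen_univ (Set.subset_univ K)
  -- clamping an approximation of `2 k` gives a function in `S` between `1_K` and `1`
  obtain ⟨s, hsS, hs⟩ := hSdense ((2 : ℝ) • ⟨k, hkc⟩) (1 / 2) (by norm_num)
  set c := fun y => min (max (s y) 0) 1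
  obtain ⟨hcμ, hcν, hc⟩ := hS c (hSclamp s hsS)
  have hcK : ∀ y ∈ K, 1 ≤ c y := by
    intro y hy
    have hky : k y = 1 := hkK hy
    have hsy := (abs_le.1 (hs y)).1
    change -(1 / 2) ≤ s y - (2 : ℝ) • k y at hsy
    rw [hky, smul_eq_mul] at hsy
    exact le_min (le_max_of_le_left (by linarith)) le_rfl
  have hK' := measureReal_le_integral_of_one_le hK.measurableSet hK.measure_lt_top.ne hcμ
    (fun y => le_min (le_max_right _ _) zero_le_one) hcK
  have hν := integral_le_measureReal_univ hcν (fun y => min_le_right _ _)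
  rw [← ENNReal.toReal_le_toReal hK.measure_lt_top.ne (measure_ne_top ν _)]
  exact hK'.trans (hc ▸ hν)

theorem Measure.ext_of_integral_eq_of_dense [μ.Regular] [ν.Regular]
    [IsFiniteMeasure ν]
    (hS : ∀ s ∈ S, Integrable s μ ∧ Integrable s ν ∧ ∫ y, s y ∂μ = ∫ y, s y ∂ν)
    (hSclamp : ∀ s ∈ S, (fun y => min (max (s y) 0) 1) ∈ S)
    (hSdense : ∀ k : C_c(Δ, ℝ), ∀ ε > 0, ∃ s ∈ S, ∀ y, |s y - k y| ≤ ε) :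
    μ = ν := by
  have := isFiniteMeasure_of_integral_eq_of_dense hS hSclamp hSdense
  refine Measure.ext_of_integral_eq_on_compactlySupported fun k => ?_
  refine integral_eq_of_forall_abs_sub_le k.integrable k.integrable fun ε hε => ?_
  obtain ⟨s, hsS, hsk⟩ := hSdense k ε hε
  obtain ⟨hsμ, hsν, hs⟩ := hS s hsS
  exact ⟨s, hsμ, hsν, hs, hsk⟩

end Regular

end MeasureTheory

@[simp] lemma cplx_apply {X : Type*} [TopologicalSpace X] (f : X →ᵇ ℝ) (x : X) :
    cplx f x = (f x : ℂ) := rfl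

lemma cplx_mem_AofB {X : Type*} [TopologicalSpace X] {B : Set (X →ᵇ ℝ)} (hB0 : 0 ∈ B)
    {g : X →ᵇ ℝ} (hg : g ∈ B) : cplx g ∈ AofB B :=
  subset_closure ⟨g, hg, 0, hB0, by ext x; simp⟩

lemma zero_mem_BE {X : Type*} [TopologicalSpace X] {mX : MeasurableSpace X} {μ : Measure X}
    {F : Set (X → ℝ)} (hF0 : (0 : X → ℝ) ∈ F) : 0 ∈ BE μ F :=
  ⟨measurable_const, hF0, integrable_zero X ℝ μ⟩

noncomputable def BoundedContinuousFunction.unitClamp {X : Type*} [TopologicalSpace X]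
    (g : X →ᵇ ℝ) : X →ᵇ ℝ :=
  BoundedContinuousFunction.comp (fun t => min (max t 0) 1)
    ((LipschitzWith.id.max_const 0).min_const 1) g

@[simp] lemma BoundedContinuousFunction.unitClamp_apply {X : Type*} [TopologicalSpace X]
    (g : X →ᵇ ℝ) (x : X) : g.unitClamp x = min (max (g x) 0) 1 := rfl

lemma abs_min_max_zero_one_le (t : ℝ) : |min (max t 0) 1| ≤ |t| := by
  rw [abs_of_nonneg (le_min (le_max_right t 0) zero_le_one)]
  exact (min_le_left _ _).trans (max_le (le_abs_self t) (abs_nonneg t))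

lemma unitClamp_mem_BE {X : Type*} [TopologicalSpace X] {mX : MeasurableSpace X}
    {μ : Measure X} {F : Set (X → ℝ)} (hMarkov : ∀ f ∈ F, (fun x => min (max (f x) 0) 1) ∈ F)
    {g : X →ᵇ ℝ} (hg : g ∈ BE μ F) : g.unitClamp ∈ BE μ F := by
  obtain ⟨hgm, hgF, hgi⟩ := hg
  have hm : Measurable g.unitClamp := (hgm.max measurable_const).min measurable_const
  refine ⟨hm, hMarkov _ hgF, hgi.mono hm.aestronglyMeasurable (ae_of_all _ fun x => ?_)⟩
  simpa [Real.norm_eq_abs] using abs_min_max_zero_one_le (g x)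

section Transform

variable {X Δ : Type*} [TopologicalSpace X] [TopologicalSpace Δ]

/-- The real part of the Gelfand transform of a real function, `g ↦ ĝ`. -/
noncomputable def realTransform (G : (X →ᵇ ℂ) → C₀(Δ, ℂ)) (g : X →ᵇ ℝ) (y : Δ) : ℝ :=
  (G (cplx g) y).re

variable {G : (X →ᵇ ℂ) → C₀(Δ, ℂ)}

lemma continuous_realTransform (g : X →ᵇ ℝ) : Continuous (realTransform G g) :=
  Complex.continuous_re.comp (map_continuous (G (cplx g)))

lemma integrable_realTransform [MeasurableSpace Δ] [OpensMeasurableSpace Δ] (m : Measure Δ)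
    [IsFiniteMeasure m] (g : X →ᵇ ℝ) : Integrable (realTransform G g) m :=
  ((G (cplx g)).toBCF.integrable m).re

variable {B : Set (X →ᵇ ℝ)} {ι : X → Δ}

lemma realTransform_apply_of_mem (hGeval : ∀ a ∈ AofB B, ∀ x : X, G a (ι x) = a x)
    (hB0 : 0 ∈ B) {g : X →ᵇ ℝ} (hg : g ∈ B) (x : X) :
    realTransform G g (ι x) = g x := by
  simp [realTransform, hGeval _ (cplx_mem_AofB hB0 hg)]

lemma realTransform_unitClamp (hGeval : ∀ a ∈ AofB B, ∀ x : X, G a (ι x) = a x)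
    (hι : DenseRange ι) (hB0 : 0 ∈ B) {g : X →ᵇ ℝ} (hg : g ∈ B)
    (hgc : g.unitClamp ∈ B) :
    realTransform G g.unitClamp = fun y => min (max (realTransform G g y) 0) 1 := by
  refine hι.equalizer (continuous_realTransform _)
    (((continuous_realTransform g).max continuous_const).min continuous_const) (funext fun x => ?_)
  simp [realTransform_apply_of_mem hGeval hB0 hg, realTransform_apply_of_mem hGeval hB0 hgc]

lemma norm_apply_sub_le_dist (hGeval : ∀ a ∈ AofB B, ∀ x : X, G a (ι x) = a x)
    (hι : DenseRange ι) {a b : X →ᵇ ℂ} (ha : a ∈ AofB B) (hb : b ∈ AofB B) (y : Δ) :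
    ‖G a y - G b y‖ ≤ dist a b := by
  refine hι.induction_on y (isClosed_le (by fun_prop) continuous_const) fun x => ?_
  rw [hGeval a ha, hGeval b hb, ← dist_eq_norm]
  exact BoundedContinuousFunction.dist_coe_le_dist x

lemma exists_mem_abs_realTransform_sub_le (hGeval : ∀ a ∈ AofB B, ∀ x : X, G a (ι x) = a x)
    (hι : DenseRange ι) (hGsurj : ∀ h : C₀(Δ, ℂ), ∃ a ∈ AofB B, G a = h) (hB0 : 0 ∈ B)
    (k : C_c(Δ, ℝ)) {ε : ℝ} (hε : 0 < ε) :
    ∃ φ ∈ B, ∀ y, |realTransform G φ y - k y| ≤ ε := by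
  obtain ⟨a, haA, hak⟩ := hGsurj ⟨⟨fun y => (k y : ℂ), by fun_prop⟩,
    by simpa [Function.comp_def] using (Complex.continuous_ofReal.tendsto 0).comp (zero_at_infty k)⟩
  obtain ⟨b, ⟨φ, hφ, ψ, hψ, rfl⟩, hab⟩ := Metric.mem_closure_iff.1 haA ε hε
  have hbA : cplx φ + Complex.I • cplx ψ ∈ AofB B := subset_closure ⟨φ, hφ, ψ, hψ, rfl⟩
  have hφb : realTransform G φ = fun y => (G (cplx φ + Complex.I • cplx ψ) y).re := by
    refine hι.equalizer (continuous_realTransform φ) (by fun_prop) (funext fun x => ?_)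
    simp [realTransform_apply_of_mem hGeval hB0 hφ, hGeval _ hbA]
  have hka : ∀ y, k y = (G a y).re := fun y => by simp [hak]
  refine ⟨φ, hφ, fun y => ?_⟩
  rw [hφb, hka, ← Complex.sub_re]
  exact (Complex.abs_re_le_norm _).trans
    ((norm_apply_sub_le_dist hGeval hι hbA haA y).trans (dist_comm a _ ▸ hab.le))

end Transform

theorem transferred_energy_measure_eq_general {X : Type*} [TopologicalSpace X]
    {mX : MeasurableSpace X} (μ : Measure X)
    (F : Set (X → ℝ)) (E : (X → ℝ) → (X → ℝ) → ℝ)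
    -- (E, F) is a symmetric Dirichlet form on L²(X, μ; ℝ):
    (hFsmul : ∀ (c : ℝ), ∀ f ∈ F, c • f ∈ F)
    -- Markov property
    (hMarkov : ∀ f ∈ F, (fun x => min (max (f x) 0) 1) ∈ F ∧
      E (fun x => min (max (f x) 0) 1) (fun x => min (max (f x) 0) 1) ≤ E f f)
    {Δ : Type*} [TopologicalSpace Δ] [LocallyCompactSpace Δ] [T2Space Δ]
    [MeasurableSpace Δ] [BorelSpace Δ]
    (ι : X → Δ) (hι : DenseRange ι)
    (G : (X →ᵇ ℂ) → C₀(Δ, ℂ))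
    (hGeval : ∀ a ∈ AofB (BE μ F), ∀ x : X, G a (ι x) = a x)
    (hGsurj : ∀ h : C₀(Δ, ℂ), ∃ a ∈ AofB (BE μ F), G a = h)
    (f : X →ᵇ ℝ) (hf : f ∈ BE μ F)
    -- Γ is a nonnegative measure on σ(B(E)), the σ-algebra generated by B(E)
    (mE : MeasurableSpace X)
    (Γ : @Measure X mE)
    (hΓ : ∀ φ ∈ BE μ F,
      2 * ∫ x, φ x ∂Γ = 2 * E (⇑φ * ⇑f) (⇑f) - E (⇑φ) (⇑f * ⇑f))
    -- Γh = (Γ(f))^ is the transferred Radon measure of Γ on Δ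
    (Γh : Measure Δ) (hΓhreg : Γh.Regular)
    (hΓh : ∀ g ∈ BE μ F, Integrable (fun y => ((G (cplx g)) y).re) Γh ∧
      ∫ x, g x ∂Γ = ∫ y, ((G (cplx g)) y).re ∂Γh) :
    (∀ φ ∈ BE μ F,
      2 * ∫ y, ((G (cplx φ)) y).re ∂Γh =
        2 * E (⇑φ * ⇑f) (⇑f) - E (⇑φ) (⇑f * ⇑f)) ∧
    ∀ Γ' : Measure Δ, Γ'.Regular → IsFiniteMeasure Γ' →
      (∀ φ ∈ BE μ F,
        2 * ∫ y, ((G (cplx φ)) y).re ∂Γ' =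
          2 * E (⇑φ * ⇑f) (⇑f) - E (⇑φ) (⇑f * ⇑f)) →
      Γh = Γ' := by
  have := hΓhreg
  have hB0 : 0 ∈ BE μ F := zero_mem_BE (by simpa using hFsmul 0 _ hf.2.1)
  have hMarkovBE : ∀ g ∈ BE μ F, g.unitClamp ∈ BE μ F :=
    fun g => unitClamp_mem_BE fun h hh => (hMarkov h hh).1
  have hΓh_eq : ∀ φ ∈ BE μ F, 2 * ∫ y, ((G (cplx φ)) y).re ∂Γh =
      2 * E (⇑φ * ⇑f) (⇑f) - E (⇑φ) (⇑f * ⇑f) :=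
    fun φ hφ => (hΓh φ hφ).2 ▸ hΓ φ hφ
  refine ⟨hΓh_eq, fun Γ' _ _ hΓ' => ?_⟩
  refine Measure.ext_of_integral_eq_of_dense (S := realTransform G '' BE μ F) ?_ ?_ ?_
  · rintro _ ⟨φ, hφ, rfl⟩
    exact ⟨(hΓh φ hφ).1, integrable_realTransform Γ' φ,
      by unfold realTransform; linarith [hΓh_eq φ hφ, hΓ' φ hφ]⟩
  · rintro _ ⟨φ, hφ, rfl⟩
    exact ⟨φ.unitClamp, hMarkovBE φ hφ,
      realTransform_unitClamp hGeval hι hB0 hφ (hMarkovBE φ hφ)⟩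
  · intro k ε hε
    obtain ⟨φ, hφ, hφk⟩ := exists_mem_abs_realTransform_sub_le hGeval hι hGsurj hB0 k hε
    exact ⟨_, ⟨φ, hφ, rfl⟩, hφk⟩

/-- Assume `(E, F)` admits energy measures: for `f ∈ B(E)` let `Γ` be a
nonnegative measure on `σ(B(E))` integrating all of `B(E)` with
`2 ∫_X φ dΓ = 2 E(φf, f) − E(φ, f²)` for all `φ ∈ B(E)`.  Let `Γ̂` be the transferred
Radon measure of `Γ` on `Δ`.  Then `2 ∫_Δ φ̂ dΓ̂ = 2 Ê(φ̂ f̂, f̂) − Ê(φ̂, f̂²)` for all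
`φ ∈ B(E)`; consequently `Γ̂ = (Γ(f))^` coincides with the energy measure of `f̂` for the
transferred Dirichlet form (the unique finite nonnegative Radon measure with that
property). -/
theorem transferred_energy_measure_eq {X : Type*} [Nonempty X] [TopologicalSpace X] [DiscreteTopology X]
    {mX : MeasurableSpace X} (μ : Measure X)
    (F : Set (X → ℝ)) (E : (X → ℝ) → (X → ℝ) → ℝ)
    -- (E, F) is a symmetric Dirichlet form on L²(X, μ; ℝ):
    (hF2 : ∀ f ∈ F, MemLp f 2 μ)
    (hFae : ∀ f ∈ F, ∀ g : X → ℝ, g =ᵐ[μ] f → g ∈ F)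
    (hFadd : ∀ f ∈ F, ∀ g ∈ F, f + g ∈ F)
    (hFsmul : ∀ (c : ℝ), ∀ f ∈ F, c • f ∈ F)
    (hFdense : Dense {h : Lp ℝ 2 μ | ∃ f ∈ F, (⇑h : X → ℝ) =ᵐ[μ] f})
    (hEsymm : ∀ f g, E f g = E g f)
    (hEae : ∀ f g f' : X → ℝ, f' =ᵐ[μ] f → E f g = E f' g)
    (hEadd : ∀ f ∈ F, ∀ g ∈ F, ∀ h ∈ F, E (f + g) h = E f h + E g h)
    (hEsmul : ∀ (c : ℝ), ∀ f ∈ F, ∀ g ∈ F, E (c • f) g = c * E f g)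
    (hEpos : ∀ f ∈ F, 0 ≤ E f f)
    -- closedness: F is complete in the norm (E(u,u) + ‖u‖²_{L²})^{1/2}
    (hEclosed : ∀ u : ℕ → (X → ℝ), (∀ n, u n ∈ F) →
      (∀ ε > 0, ∃ N, ∀ n ≥ N, ∀ m ≥ N,
        E (u n - u m) (u n - u m) + ((eLpNorm (u n - u m) 2 μ).toReal) ^ 2 < ε) →
      ∃ v ∈ F, Tendsto
        (fun n => E (u n - v) (u n - v) + ((eLpNorm (u n - v) 2 μ).toReal) ^ 2)
        atTop (𝓝 0))
    -- Markov property
    (hMarkov : ∀ f ∈ F, (fun x => min (max (f x) 0) 1) ∈ F ∧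
      E (fun x => min (max (f x) 0) 1) (fun x => min (max (f x) 0) 1) ≤ E f f)
    -- B(E) vanishes nowhere and is separable in the supremum norm
    (hnv : ∀ x : X, ∃ f ∈ BE μ F, f x ≠ 0)
    (hsep : TopologicalSpace.IsSeparable (BE μ F))
    {Δ : Type*} [TopologicalSpace Δ] [LocallyCompactSpace Δ] [T2Space Δ]
    [SecondCountableTopology Δ] [MeasurableSpace Δ] [BorelSpace Δ]
    (ι : X → Δ) (hι : DenseRange ι)
    (G : (X →ᵇ ℂ) → C₀(Δ, ℂ))
    (hGeval : ∀ a ∈ AofB (BE μ F), ∀ x : X, G a (ι x) = a x)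
    (hGsurj : ∀ h : C₀(Δ, ℂ), ∃ a ∈ AofB (BE μ F), G a = h)
    (ν : Measure Δ) (hνreg : ν.Regular)
    (hν : ∀ f ∈ BE μ F, Integrable (fun φ => ((G (cplx f)) φ).re) ν ∧
      ∫ x, f x ∂μ = ∫ φ, ((G (cplx f)) φ).re ∂ν)
    (f : X →ᵇ ℝ) (hf : f ∈ BE μ F)
    -- Γ is a nonnegative measure on σ(B(E)), the σ-algebra generated by B(E)
    (mE : MeasurableSpace X)
    (hmE : mE = ⨆ g ∈ BE μ F, MeasurableSpace.comap (⇑g : X → ℝ) inferInstance)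
    (Γ : @Measure X mE)
    (hΓint : ∀ g ∈ BE μ F, Integrable (⇑g) Γ)
    (hΓ : ∀ φ ∈ BE μ F,
      2 * ∫ x, φ x ∂Γ = 2 * E (⇑φ * ⇑f) (⇑f) - E (⇑φ) (⇑f * ⇑f))
    -- Γh = (Γ(f))^ is the transferred Radon measure of Γ on Δ
    (Γh : Measure Δ) (hΓhreg : Γh.Regular)
    (hΓh : ∀ g ∈ BE μ F, Integrable (fun y => ((G (cplx g)) y).re) Γh ∧
      ∫ x, g x ∂Γ = ∫ y, ((G (cplx g)) y).re ∂Γh) :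
    (∀ φ ∈ BE μ F,
      2 * ∫ y, ((G (cplx φ)) y).re ∂Γh =
        2 * E (⇑φ * ⇑f) (⇑f) - E (⇑φ) (⇑f * ⇑f)) ∧
    ∀ Γ' : Measure Δ, Γ'.Regular → IsFiniteMeasure Γ' →
      (∀ φ ∈ BE μ F,
        2 * ∫ y, ((G (cplx φ)) y).re ∂Γ' =
          2 * E (⇑φ * ⇑f) (⇑f) - E (⇑φ) (⇑f * ⇑f)) →
      Γh = Γ' :=
  transferred_energy_measure_eq_general (mX := mX) μ F E hFsmul hMarkov ι hι G hGeval hGsurj f hf mE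
    Γ hΓ Γh hΓhreg hΓh
end

section
/- Assume in addition that B separates the points of X (for all x ≠ y in X there is f ∈ B with f(x) ≠ f(y), so that ι is injective), that B is separable with respect to the supremum norm (so that Δ is second countable), and that ι(X) is a Borel subset of Δ. Then for every finite measure μ ∈ D(B), the map ι is measurable from (X, σ(B)) to the Borel σ-algebra of Δ, and the pushforward measure ι_*μ, defined by (ι_*μ)(A) = μ(ι⁻¹(A)) for Borel A ⊂ Δ, coincides with μ̂; in particular μ̂(Δ ∖ ι(X)) = 0, i.e. ι(X) has full μ̂-measure in Δ. -/
/-!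
Elements of `A(B)` are uniform limits of `σ(B)`-measurable functions, hence measurable, and every
`g ∈ C_c(Δ)` is the real part of a Gelfand transform `â`, so `g ∘ ι = Re a` is measurable; by second
countability this makes `ι` measurable. Since `Re â` is uniformly approximated by the transforms
`f̂`, `f ∈ B`, the transfer identity `∫ f dμ = ∫ f̂ dν` extends from `B` to `C_c(Δ)` once `ν` is
known to be finite, and the Riesz–Markov–Kakutani uniqueness for regular measures gives
`ι_*μ = ν`. Finiteness comes from the same approximation: for compact `K`, an `f ∈ B` with `f̂`
close to a Urysohn function of `K` gives `ν K ≤ 4 ∫ f̂² dν = 4 ∫ f² dμ ≤ 9 μ(X)`.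
-/

open MeasureTheory Filter Topology BoundedContinuousFunction
open scoped ZeroAtInfty ENNReal CompactlySupported

theorem BoundedContinuousFunction.isClosed_setOf_measurable {α E : Type*} [TopologicalSpace α]
    [MeasurableSpace α] [PseudoMetricSpace E] [MeasurableSpace E] [BorelSpace E] :
    IsClosed {f : α →ᵇ E | Measurable f} :=
  IsSeqClosed.isClosed fun _ _ hu hlim =>
    measurable_of_tendsto_metrizable hu ((continuous_coe.tendsto _).comp hlim)

theorem measurable_of_forall_compactlySupported_comp {α Δ : Type*} [MeasurableSpace α]
    [TopologicalSpace Δ] [RegularSpace Δ] [LocallyCompactSpace Δ] [SecondCountableTopology Δ]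
    [MeasurableSpace Δ] [BorelSpace Δ] {ι : α → Δ}
    (h : ∀ g : C_c(Δ, ℝ), Measurable (g ∘ ι)) : Measurable ι := by
  refine measurable_of_isOpen fun U hU => ?_
  -- Urysohn functions supported in `U` cover `U`, and countably many of them suffice.
  set S := {V | ∃ g : C_c(Δ, ℝ), V = Function.support g ∧ V ⊆ U}
  have hUS : U = ⋃₀ S := by
    refine subset_antisymm (fun φ hφ => ?_) (Set.sUnion_subset fun V ⟨_, _, hVU⟩ => hVU)
    obtain ⟨g, hg1, hg0, hgc, -⟩ := exists_continuous_one_zero_of_isCompact isCompact_singleton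
      hU.isClosed_compl (Set.disjoint_singleton_left.mpr (not_not.mpr hφ))
    refine ⟨Function.support g, ⟨⟨g, hgc⟩, rfl, fun ψ hψ => ?_⟩, by simp [hg1 rfl]⟩
    by_contra hψU
    exact hψ (hg0 hψU)
  obtain ⟨T, hTc, hTS, hT⟩ := TopologicalSpace.isOpen_sUnion_countable S
    (by rintro _ ⟨g, rfl, -⟩; exact g.continuous.isOpen_support)
  rw [hUS, ← hT, Set.preimage_sUnion]
  refine .biUnion hTc fun V hV => ?_
  obtain ⟨g, rfl, -⟩ := hTS hV
  exact (h g) (measurableSet_singleton 0).compl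

namespace MeasureTheory

theorem measure_le_ofReal_integral_of_one_le {α : Type*} [MeasurableSpace α] {ν : Measure α}
    {u : α → ℝ} {K : Set α} (hu : Integrable u ν) (hu0 : 0 ≤ u) (huK : ∀ x ∈ K, 1 ≤ u x) :
    ν K ≤ ENNReal.ofReal (∫ x, u x ∂ν) := by
  rw [ofReal_integral_eq_lintegral_ofReal hu (Eventually.of_forall hu0)]
  calc ν K ≤ ν {x | 1 ≤ ENNReal.ofReal (u x)} := measure_mono fun x hx => by simpa using huK x hx
    _ ≤ ∫⁻ x, ENNReal.ofReal (u x) ∂ν := by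
      simpa using mul_meas_ge_le_lintegral₀ hu.1.aemeasurable.ennreal_ofReal 1

theorem Measure.isFiniteMeasure_of_forall_isCompact_le {α : Type*} [TopologicalSpace α]
    [MeasurableSpace α] {ν : Measure α} [ν.Regular] {C : ℝ≥0∞} (hC : C ≠ ∞)
    (h : ∀ K, IsCompact K → ν K ≤ C) : IsFiniteMeasure ν :=
  ⟨by
    rw [isOpen_univ.measure_eq_iSup_isCompact ν]
    exact (iSup₂_le fun K _ => iSup_le (h K)).trans_lt hC.lt_top⟩

theorem integral_eq_of_forall_abs_sub_le_s16 {α : Type*} [MeasurableSpace α] {ρ₁ ρ₂ : Measure α}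
    [IsFiniteMeasure ρ₁] [IsFiniteMeasure ρ₂] {g : α → ℝ} (hg₁ : Integrable g ρ₁)
    (hg₂ : Integrable g ρ₂)
    (h : ∀ ε > 0, ∃ u : α → ℝ, Integrable u ρ₁ ∧ Integrable u ρ₂ ∧ ∫ x, u x ∂ρ₁ = ∫ x, u x ∂ρ₂ ∧
      ∀ x, |u x - g x| ≤ ε) :
    ∫ x, g x ∂ρ₁ = ∫ x, g x ∂ρ₂ := by
  refine eq_of_forall_dist_le fun ε hε => ?_
  set c := ρ₁.real Set.univ + ρ₂.real Set.univ
  obtain ⟨u, hu₁, hu₂, hu, hug⟩ := h (ε / (c + 1)) (by positivity)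
  have hclose : ∀ (ρ : Measure α) [IsFiniteMeasure ρ], Integrable u ρ → Integrable g ρ →
      dist (∫ x, u x ∂ρ : ℝ) (∫ x, g x ∂ρ) ≤ ε / (c + 1) * ρ.real Set.univ := by
    intro ρ _ hu hg
    rw [dist_eq_norm, ← integral_sub hu hg]
    exact norm_integral_le_of_norm_le_const (Eventually.of_forall fun x => hug x)
  calc dist (∫ x, g x ∂ρ₁ : ℝ) (∫ x, g x ∂ρ₂)
      ≤ dist (∫ x, u x ∂ρ₁) (∫ x, g x ∂ρ₁) + dist (∫ x, u x ∂ρ₂) (∫ x, g x ∂ρ₂) := by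
        rw [hu]; exact dist_triangle_left _ _ _
    _ ≤ ε / (c + 1) * c := by
        rw [mul_add]; exact add_le_add (hclose ρ₁ hu₁ hg₁) (hclose ρ₂ hu₂ hg₂)
    _ ≤ ε := by
        rw [div_mul_eq_mul_div, div_le_iff₀ (by positivity)]
        nlinarith

end MeasureTheory

section GelfandTransform

variable {X Δ : Type*} [TopologicalSpace X] [TopologicalSpace Δ] {B : Set (X →ᵇ ℝ)}
  {ι : X → Δ} {G : (X →ᵇ ℂ) → C₀(Δ, ℂ)}

theorem cplx_add_I_smul_mem_AofB {f g : X →ᵇ ℝ} (hf : f ∈ B) (hg : g ∈ B) :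
    cplx f + Complex.I • cplx g ∈ AofB B :=
  subset_closure ⟨f, hf, g, hg, rfl⟩

theorem cplx_mem_AofB_s16 (hBsmul : ∀ (c : ℝ), ∀ f ∈ B, c • f ∈ B) {f : X →ᵇ ℝ} (hf : f ∈ B) :
    cplx f ∈ AofB B := by
  have hcplx0 : cplx (0 : X →ᵇ ℝ) = 0 := by ext; simp [cplx]
  simpa [hcplx0] using cplx_add_I_smul_mem_AofB hf (hBsmul 0 f hf)

theorem measurable_of_mem_AofB [MeasurableSpace X] (hB : ∀ f ∈ B, Measurable f) {a : X →ᵇ ℂ}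
    (ha : a ∈ AofB B) : Measurable a := by
  refine closure_minimal ?_ isClosed_setOf_measurable ha
  rintro _ ⟨f, hf, g, hg, rfl⟩
  have hf' := hB f hf
  have hg' := hB g hg
  change Measurable fun x => (f x : ℂ) + Complex.I * g x
  fun_prop

theorem re_apply_cplx_comp (hBsmul : ∀ (c : ℝ), ∀ f ∈ B, c • f ∈ B)
    (hGeval : ∀ a ∈ AofB B, ∀ x : X, G a (ι x) = a x) {f : X →ᵇ ℝ} (hf : f ∈ B) (x : X) :
    (G (cplx f) (ι x)).re = f x := by
  rw [hGeval _ (cplx_mem_AofB_s16 hBsmul hf)]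
  simp [cplx]

theorem re_apply_cplx_mul_self (hBsmul : ∀ (c : ℝ), ∀ f ∈ B, c • f ∈ B)
    (hBmul : ∀ f ∈ B, ∀ g ∈ B, f * g ∈ B) (hι : DenseRange ι)
    (hGeval : ∀ a ∈ AofB B, ∀ x : X, G a (ι x) = a x) {f : X →ᵇ ℝ} (hf : f ∈ B) (φ : Δ) :
    (G (cplx (f * f)) φ).re = (G (cplx f) φ).re ^ 2 :=
  hι.induction_on φ (isClosed_eq (by fun_prop) (by fun_prop)) fun x => by
    rw [re_apply_cplx_comp hBsmul hGeval (hBmul f hf f hf), re_apply_cplx_comp hBsmul hGeval hf,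
      coe_mul, Pi.mul_apply, sq]

theorem exists_mem_forall_abs_re_sub_le (hBsmul : ∀ (c : ℝ), ∀ f ∈ B, c • f ∈ B)
    (hι : DenseRange ι) (hGeval : ∀ a ∈ AofB B, ∀ x : X, G a (ι x) = a x) {a : X →ᵇ ℂ}
    (ha : a ∈ AofB B) {ε : ℝ} (hε : 0 < ε) :
    ∃ f ∈ B, ∀ φ, |(G (cplx f) φ).re - (G a φ).re| ≤ ε := by
  obtain ⟨_, ⟨f, hf, g, hg, rfl⟩, hab⟩ := Metric.mem_closure_iff.mp ha ε hε
  refine ⟨f, hf, fun φ => hι.induction_on φ (isClosed_le (by fun_prop) continuous_const) ?_⟩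
  intro x
  rw [hGeval _ (cplx_mem_AofB_s16 hBsmul hf), hGeval a ha]
  calc |(cplx f x).re - (a x).re| = |((cplx f + Complex.I • cplx g) x - a x).re| := by
        simp [cplx]
    _ ≤ ‖(cplx f + Complex.I • cplx g) x - a x‖ := Complex.abs_re_le_norm _
    _ ≤ ε := by
        rw [← dist_eq_norm, dist_comm]
        exact (dist_coe_le_dist x).trans hab.le

theorem exists_mem_AofB_re_eq (hGsurj : ∀ h : C₀(Δ, ℂ), ∃ a ∈ AofB B, G a = h)
    (g : C_c(Δ, ℝ)) : ∃ a ∈ AofB B, ∀ φ, (G a φ).re = g φ := by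
  obtain ⟨a, ha, hag⟩ := hGsurj (g.compLeft Complex.ofRealCLM : C_c(Δ, ℂ))
  refine ⟨a, ha, fun φ => ?_⟩
  rw [hag]
  exact congrArg Complex.re (g.compLeft_apply (map_zero Complex.ofRealCLM) φ) |>.trans
    (Complex.ofReal_re _)

end GelfandTransform

section TransferredMeasure

variable {X Δ : Type*} [TopologicalSpace X] [MeasurableSpace X] [TopologicalSpace Δ]
  [MeasurableSpace Δ] {B : Set (X →ᵇ ℝ)} {ι : X → Δ} {G : (X →ᵇ ℂ) → C₀(Δ, ℂ)}
  {μ : Measure X} {ν : Measure Δ}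

theorem measure_isCompact_le_of_transfer [T2Space Δ] [LocallyCompactSpace Δ]
    (hBsmul : ∀ (c : ℝ), ∀ f ∈ B, c • f ∈ B)
    (hBmul : ∀ f ∈ B, ∀ g ∈ B, f * g ∈ B) (hι : DenseRange ι)
    (hGeval : ∀ a ∈ AofB B, ∀ x : X, G a (ι x) = a x)
    (hGsurj : ∀ h : C₀(Δ, ℂ), ∃ a ∈ AofB B, G a = h) [IsFiniteMeasure μ]
    (hν : ∀ f ∈ B, Integrable (fun φ => ((G (cplx f)) φ).re) ν ∧
      ∫ x, f x ∂μ = ∫ φ, ((G (cplx f)) φ).re ∂ν)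
    {K : Set Δ} (hK : IsCompact K) : ν K ≤ ENNReal.ofReal (9 * μ.real Set.univ) := by
  obtain ⟨g, hgK, -, hgc, hg01⟩ :=
    exists_continuous_one_zero_of_isCompact hK isClosed_empty (Set.disjoint_empty K)
  obtain ⟨a, ha, hag⟩ := exists_mem_AofB_re_eq hGsurj ⟨g, hgc⟩
  obtain ⟨f, hf, hfa⟩ := exists_mem_forall_abs_re_sub_le hBsmul hι hGeval ha one_half_pos
  -- `F := Re (G (cplx f))` is within `1/2` of `g`: `F² ≥ 1/4` on `K` and `|f| = |F ∘ ι| ≤ 3/2`.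
  have hFg : ∀ φ, |(G (cplx f) φ).re - g φ| ≤ 1 / 2 := fun φ => hag φ ▸ hfa φ
  have hff := hBmul f hf f hf
  have hsq := re_apply_cplx_mul_self hBsmul hBmul hι hGeval hf
  have hbound : ∀ x, ‖(f * f) x‖ ≤ 9 / 4 := fun x => by
    have hfx := hFg (ι x)
    rw [re_apply_cplx_comp hBsmul hGeval hf] at hfx
    have hgx := hg01 (ι x)
    rw [coe_mul, Pi.mul_apply, norm_mul, ← sq, Real.norm_eq_abs, sq_abs]
    nlinarith [abs_le.mp hfx, hgx.1, hgx.2]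
  calc ν K ≤ ENNReal.ofReal (∫ φ, 4 * (G (cplx (f * f)) φ).re ∂ν) := by
        refine measure_le_ofReal_integral_of_one_le ((hν _ hff).1.const_mul 4)
          (fun φ => by simp only [hsq]; positivity) fun φ hφ => ?_
        have hFφ := abs_le.mp (hFg φ)
        rw [hgK hφ, Pi.one_apply] at hFφ
        rw [hsq]
        nlinarith [hFφ.1]
    _ = ENNReal.ofReal (4 * ∫ x, (f * f) x ∂μ) := by rw [integral_const_mul, (hν _ hff).2]
    _ ≤ ENNReal.ofReal (9 * μ.real Set.univ) := by
        refine ENNReal.ofReal_le_ofReal ?_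
        have hint := (le_abs_self _).trans
          (norm_integral_le_of_norm_le_const (μ := μ) (Eventually.of_forall hbound))
        linarith

theorem integral_map_eq_integral_of_transfer [BorelSpace Δ]
    (hBsmul : ∀ (c : ℝ), ∀ f ∈ B, c • f ∈ B)
    (hι : DenseRange ι) (hιm : Measurable ι) (hGeval : ∀ a ∈ AofB B, ∀ x : X, G a (ι x) = a x)
    (hGsurj : ∀ h : C₀(Δ, ℂ), ∃ a ∈ AofB B, G a = h) [IsFiniteMeasure μ] [IsFiniteMeasure ν]
    (hμ : ∀ f ∈ B, Integrable (⇑f) μ)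
    (hν : ∀ f ∈ B, Integrable (fun φ => ((G (cplx f)) φ).re) ν ∧
      ∫ x, f x ∂μ = ∫ φ, ((G (cplx f)) φ).re ∂ν)
    (g : C_c(Δ, ℝ)) : ∫ φ, g φ ∂(μ.map ι) = ∫ φ, g φ ∂ν := by
  refine integral_eq_of_forall_abs_sub_le_s16 g.integrable g.integrable fun ε hε => ?_
  obtain ⟨a, ha, hag⟩ := exists_mem_AofB_re_eq hGsurj g
  obtain ⟨f, hf, hfa⟩ := exists_mem_forall_abs_re_sub_le hBsmul hι hGeval ha hε
  have hF : Continuous fun φ => (G (cplx f) φ).re := by fun_prop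
  have hFι : (fun φ => (G (cplx f) φ).re) ∘ ι = f :=
    funext (re_apply_cplx_comp hBsmul hGeval hf)
  refine ⟨_, ?_, (hν f hf).1, ?_, fun φ => hag φ ▸ hfa φ⟩
  · rw [integrable_map_measure hF.aestronglyMeasurable hιm.aemeasurable, hFι]
    exact hμ f hf
  · rw [integral_map hιm.aemeasurable hF.aestronglyMeasurable, ← (hν f hf).2]
    exact congrArg (fun u : X → ℝ => ∫ x, u x ∂μ) hFι

end TransferredMeasure

theorem pushforward_eq_transferred_measure_general {X : Type*} [TopologicalSpace X]
    (B : Set (X →ᵇ ℝ))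
    (hBsmul : ∀ (c : ℝ), ∀ f ∈ B, c • f ∈ B)
    (hBmul : ∀ f ∈ B, ∀ g ∈ B, f * g ∈ B)
    {Δ : Type*} [TopologicalSpace Δ] [LocallyCompactSpace Δ] [T2Space Δ]
    [SecondCountableTopology Δ] [MeasurableSpace Δ] [BorelSpace Δ]
    (ι : X → Δ) (hι : DenseRange ι)
    (G : (X →ᵇ ℂ) → C₀(Δ, ℂ))
    (hGeval : ∀ a ∈ AofB B, ∀ x : X, G a (ι x) = a x)
    (hGsurj : ∀ h : C₀(Δ, ℂ), ∃ a ∈ AofB B, G a = h)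
    (hBorel : MeasurableSet (Set.range ι))
    {mX : MeasurableSpace X}
    (hmX : mX = ⨆ f ∈ B, MeasurableSpace.comap (⇑f : X → ℝ) inferInstance)
    (μ : Measure X) [IsFiniteMeasure μ] (hμ : ∀ f ∈ B, Integrable (⇑f) μ)
    (ν : Measure Δ) (hνreg : ν.Regular)
    (hν : ∀ f ∈ B, Integrable (fun φ => ((G (cplx f)) φ).re) ν ∧
      ∫ x, f x ∂μ = ∫ φ, ((G (cplx f)) φ).re ∂ν) :
    Measurable ι ∧ μ.map ι = ν ∧ ν (Set.range ι)ᶜ = 0 := by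
  have hB : ∀ f ∈ B, Measurable f := fun f hf =>
    measurable_iff_comap_le.mpr (hmX ▸ le_iSup₂ (f := fun (g : X →ᵇ ℝ) (_ : g ∈ B) =>
      MeasurableSpace.comap (⇑g : X → ℝ) inferInstance) f hf)
  have hιm : Measurable ι := measurable_of_forall_compactlySupported_comp fun g => by
    obtain ⟨a, ha, hag⟩ := exists_mem_AofB_re_eq hGsurj g
    have hga : g ∘ ι = fun x => (a x).re := funext fun x => by
      rw [Function.comp_apply, ← hag, hGeval a ha]
    exact hga ▸ Complex.measurable_re.comp (measurable_of_mem_AofB hB ha)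
  have := hνreg
  have : IsFiniteMeasure ν := Measure.isFiniteMeasure_of_forall_isCompact_le
    ENNReal.ofReal_ne_top fun K => measure_isCompact_le_of_transfer hBsmul hBmul hι hGeval hGsurj hν
  have hmap : μ.map ι = ν := Measure.ext_of_integral_eq_on_compactlySupported
    (integral_map_eq_integral_of_transfer hBsmul hι hιm hGeval hGsurj hμ hν)
  refine ⟨hιm, hmap, ?_⟩
  rw [← hmap, Measure.map_apply hιm hBorel.compl, Set.preimage_compl, Set.preimage_range,
    Set.compl_univ, measure_empty]

/-- Assume in addition that `B` separates the points of `X` (so that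
`ι` is injective), that `B` is separable in the supremum norm (so that `Δ` is second
countable) and that `ι(X)` is a Borel subset of `Δ`.  Then for every finite measure
`μ ∈ D(B)` with transferred Radon measure `ν = μ̂`: the map `ι` is measurable from
`(X, σ(B))` to the Borel σ-algebra of `Δ`, the pushforward `ι_*μ` coincides with `μ̂`,
and in particular `μ̂(Δ ∖ ι(X)) = 0`, i.e. `ι(X)` has full `μ̂`-measure in `Δ`. -/
theorem pushforward_eq_transferred_measure {X : Type*} [Nonempty X] [TopologicalSpace X] [DiscreteTopology X]
    (B : Set (X →ᵇ ℝ))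
    (hBadd : ∀ f ∈ B, ∀ g ∈ B, f + g ∈ B)
    (hBsmul : ∀ (c : ℝ), ∀ f ∈ B, c • f ∈ B)
    (hBmax : ∀ f ∈ B, ∀ g ∈ B, ∃ h ∈ B, ∀ x, h x = max (f x) (g x))
    (hBmin : ∀ f ∈ B, ∀ g ∈ B, ∃ h ∈ B, ∀ x, h x = min (f x) (g x))
    (hBmul : ∀ f ∈ B, ∀ g ∈ B, f * g ∈ B)
    (hBstone : ∀ f ∈ B, ∃ h ∈ B, ∀ x, h x = min (f x) 1)
    (hBnv : ∀ x : X, ∃ f ∈ B, f x ≠ 0)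
    (hBsep : ∀ x y : X, x ≠ y → ∃ f ∈ B, f x ≠ f y)
    (hBseparable : TopologicalSpace.IsSeparable B)
    {Δ : Type*} [TopologicalSpace Δ] [LocallyCompactSpace Δ] [T2Space Δ]
    [SecondCountableTopology Δ] [MeasurableSpace Δ] [BorelSpace Δ]
    (ι : X → Δ) (hι : DenseRange ι) (hinj : Function.Injective ι)
    (G : (X →ᵇ ℂ) → C₀(Δ, ℂ))
    (hGeval : ∀ a ∈ AofB B, ∀ x : X, G a (ι x) = a x)
    (hGsurj : ∀ h : C₀(Δ, ℂ), ∃ a ∈ AofB B, G a = h)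
    (hBorel : MeasurableSet (Set.range ι))
    {mX : MeasurableSpace X}
    (hmX : mX = ⨆ f ∈ B, MeasurableSpace.comap (⇑f : X → ℝ) inferInstance)
    (μ : Measure X) [IsFiniteMeasure μ] (hμ : ∀ f ∈ B, Integrable (⇑f) μ)
    (ν : Measure Δ) (hνreg : ν.Regular)
    (hν : ∀ f ∈ B, Integrable (fun φ => ((G (cplx f)) φ).re) ν ∧
      ∫ x, f x ∂μ = ∫ φ, ((G (cplx f)) φ).re ∂ν) :
    Measurable ι ∧ μ.map ι = ν ∧ ν (Set.range ι)ᶜ = 0 :=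
  pushforward_eq_transferred_measure_general B hBsmul hBmul ι hι G hGeval hGsurj hBorel hmX μ hμ ν
    hνreg hν
end
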